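/- Let μ, ν be probability measures on ℝⁿ with finite second moments, γ ∈ Π(μ,ν), and γ_ℓ the block approximation of γ at scale ℓ. Then the squared 2-Wasserstein distance (on ℝⁿ×ℝⁿ) between γ and γ_ℓ satisfies W²(γ,γ_ℓ) ≤ 2nℓ², and consequently γ_ℓ → γ narrowly as ℓ → 0⁺. -/

import Mathlib

/-!
Partition `ℝⁿ × ℝⁿ` into the product cubes `Q_j^ℓ × Q_k^ℓ`, of diameter `√(2n)·ℓ`. Sampling
`p ∼ γ` and then a partner `q` from the normalized product measure `μ_j^ℓ ⊗ ν_k^ℓ` of the cube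
containing `p` couples `γ` with `γ_ℓ`, and `p` and `q` always lie in the same cube, so the cost
is at most `2nℓ²`. Narrow convergence follows from the same picture:
`∫ f dγ_ℓ = ∫ (∫ f d(μ_j^ℓ ⊗ ν_k^ℓ)) dγ`, where the inner average concentrates at `p` as
`ℓ → 0` for `γ`-a.e. `p`, and dominated convergence applies.
-/

open MeasureTheory ENNReal Filter Topology
noncomputable section

abbrev En (n : ℕ) : Type := EuclideanSpace ℝ (Fin n)

def IsCoupling {n : ℕ} (μ ν : Measure (En n)) (γ : Measure (En n × En n)) : Prop :=
  γ.map Prod.fst = μ ∧ γ.map Prod.snd = ν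

def tCost {n : ℕ} (γ : Measure (En n × En n)) : ℝ≥0∞ :=
  ∫⁻ p, (‖p.1 - p.2‖₊ : ℝ≥0∞) ^ 2 ∂γ

def W2sq {n : ℕ} (μ ν : Measure (En n)) : ℝ≥0∞ :=
  ⨅ (γ : Measure (En n × En n)) (_ : IsCoupling μ ν γ), tCost γ

def M2 {n : ℕ} (μ : Measure (En n)) : ℝ≥0∞ := ∫⁻ x, (‖x‖₊ : ℝ≥0∞) ^ 2 ∂μ

def dens {X : Type*} [MeasureSpace X] (μ : Measure X) (x : X) : ℝ :=
  (μ.rnDeriv volume x).toReal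

def entIntegrand {X : Type*} [MeasureSpace X] (μ : Measure X) (x : X) : ℝ :=
  dens μ x * Real.log (dens μ x)

def Hneg {X : Type*} [MeasureSpace X] (μ : Measure X) : ℝ≥0∞ :=
  ∫⁻ x, ENNReal.ofReal (-(entIntegrand μ x))

def Hpos {X : Type*} [MeasureSpace X] (μ : Measure X) : ℝ≥0∞ :=
  ∫⁻ x, ENNReal.ofReal (entIntegrand μ x)

open scoped Classical in
def entE {X : Type*} [MeasureSpace X] (μ : Measure X) : EReal :=
  if μ ≪ (volume : Measure X) then
    (if Hpos μ = ∞ then (⊤ : EReal) else ((Hpos μ).toReal : EReal) - ((Hneg μ : ℝ≥0∞) : EReal))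
  else ⊤

def W2epsE {n : ℕ} (ε : ℝ) (μ ν : Measure (En n)) : EReal :=
  ⨅ (γ : Measure (En n × En n)) (_ : IsCoupling μ ν γ),
    ((tCost γ : ℝ≥0∞) : EReal) + (ε : EReal) * entE γ

def cube {n : ℕ} (j : Fin n → ℤ) (ℓ : ℝ) : Set (En n) :=
  {x | ∀ i, (j i : ℝ) * ℓ ≤ x i ∧ x i < ((j i : ℝ) + 1) * ℓ}

def cellNormalize {n : ℕ} (μ : Measure (En n)) (S : Set (En n)) : Measure (En n) :=
  (μ S)⁻¹ • μ.restrict S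

def blockApprox {n : ℕ} (μ ν : Measure (En n)) (γ : Measure (En n × En n)) (ℓ : ℝ) :
    Measure (En n × En n) :=
  Measure.sum (fun jk : (Fin n → ℤ) × (Fin n → ℤ) =>
    γ (cube jk.1 ℓ ×ˢ cube jk.2 ℓ) •
      ((cellNormalize μ (cube jk.1 ℓ)).prod (cellNormalize ν (cube jk.2 ℓ))))

def IsCouplingP {n : ℕ} (γ η : Measure (En n × En n))
    (π : Measure ((En n × En n) × (En n × En n))) : Prop :=
  π.map Prod.fst = γ ∧ π.map Prod.snd = η

/-- Squared Euclidean transport cost on `ℝⁿ × ℝⁿ`, i.e. `|x-x'|² + |y-y'|²`. -/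
def tCostP {n : ℕ} (π : Measure ((En n × En n) × (En n × En n))) : ℝ≥0∞ :=
  ∫⁻ q, ((‖q.1.1 - q.2.1‖₊ : ℝ≥0∞) ^ 2 + (‖q.1.2 - q.2.2‖₊ : ℝ≥0∞) ^ 2) ∂π

/-- Squared 2-Wasserstein distance on `𝒫(ℝⁿ × ℝⁿ)` for the Euclidean cost. -/
def W2sqP {n : ℕ} (γ η : Measure (En n × En n)) : ℝ≥0∞ :=
  ⨅ (π : Measure ((En n × En n) × (En n × En n))) (_ : IsCouplingP γ η π), tCostP π

open scoped BoundedContinuousFunction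

lemma norm_integral_le_of_measure_univ_le_one {X : Type*} [MeasurableSpace X]
    [TopologicalSpace X] {μ : Measure X} (hμ : μ Set.univ ≤ 1) (f : X →ᵇ ℝ) : ‖∫ x, f x ∂μ‖ ≤ ‖f‖ := by
  have : IsFiniteMeasure μ := ⟨hμ.trans_lt one_lt_top⟩
  have hμ' : μ.real Set.univ ≤ 1 := by
    simpa [measureReal_def] using ENNReal.toReal_mono one_ne_top hμ
  calc ‖∫ x, f x ∂μ‖ ≤ ‖f‖ * μ.real Set.univ :=
        norm_integral_le_of_norm_le_const (ae_of_all _ f.norm_coe_le_norm)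
    _ ≤ ‖f‖ := mul_le_of_le_one_right (norm_nonneg f) hμ'

theorem tendsto_integral_of_ae_dist_le {α β : Type*} [PseudoMetricSpace α] [MeasurableSpace α]
    [OpensMeasurableSpace α] {l : Filter β} {κ : β → Measure α} {r : β → ℝ} {x : α}
    (f : α →ᵇ ℝ) (hκ : ∀ᶠ b in l, IsProbabilityMeasure (κ b)) (hr : Tendsto r l (𝓝 0))
    (hconc : ∀ᶠ b in l, ∀ᵐ y ∂κ b, dist y x ≤ r b) :
    Tendsto (fun b => ∫ y, f y ∂κ b) l (𝓝 (f x)) := by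
  rw [Metric.tendsto_nhds]
  intro ε hε
  obtain ⟨δ, hδ, hf⟩ := Metric.continuousAt_iff.1 f.continuous.continuousAt (ε / 2) (half_pos hε)
  filter_upwards [hκ, hconc, hr.eventually (gt_mem_nhds hδ)] with b hb hconc hrδ
  have hclose : ∀ᵐ y ∂κ b, ‖f y - f x‖ ≤ ε / 2 :=
    hconc.mono fun y hy => (hf (hy.trans_lt hrδ)).le
  calc dist (∫ y, f y ∂κ b) (f x) = ‖∫ y, (f y - f x) ∂κ b‖ := by
        rw [dist_eq_norm, integral_sub (f.integrable _) (integrable_const _), integral_const,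
          probReal_univ, one_smul]
    _ ≤ ε / 2 := by simpa using norm_integral_le_of_norm_le_const hclose
    _ < ε := half_lt_self hε

section FiberCoupling

variable {X ι : Type*} [MeasurableSpace X] {idx : X → ι} {γ : Measure X} {m : ι → Measure X}

def fiberCoupling (γ : Measure X) (idx : X → ι) (m : ι → Measure X) : Measure (X × X) :=
  Measure.sum fun i => (γ.restrict (idx ⁻¹' {i})).prod (m i)

lemma fiberCoupling_map_snd [SFinite γ] [∀ i, SFinite (m i)] :
    (fiberCoupling γ idx m).map Prod.snd = Measure.sum fun i => γ (idx ⁻¹' {i}) • m i := by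
  rw [fiberCoupling, Measure.map_sum measurable_snd.aemeasurable]
  simp_rw [Measure.map_snd_prod, Measure.restrict_apply_univ]

variable [Countable ι] [MeasurableSpace ι] [MeasurableSingletonClass ι]

lemma sum_restrict_fiber (γ : Measure X) (hidx : Measurable idx) :
    Measure.sum (fun i => γ.restrict (idx ⁻¹' {i})) = γ := by
  rw [← Measure.restrict_iUnion (pairwise_disjoint_fiber idx)
    (fun i => hidx (measurableSet_singleton i)), ← Set.preimage_iUnion, Set.iUnion_of_singleton,
    Set.preimage_univ, Measure.restrict_univ]

lemma ae_measure_fiber_ne_zero (γ : Measure X) (hidx : Measurable idx) :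
    ∀ᵐ x ∂γ, γ (idx ⁻¹' {idx x}) ≠ 0 := by
  have h : ∀ᵐ i ∂γ.map idx, γ.map idx {i} ≠ 0 := ae_iff_of_countable.2 fun _ h => h
  simpa [Measure.map_apply hidx (measurableSet_singleton _)] using
    ae_of_ae_map hidx.aemeasurable h

lemma fiberCoupling_map_fst [∀ i, SFinite (m i)] (hidx : Measurable idx)
    (hm : ∀ i, γ (idx ⁻¹' {i}) ≠ 0 → IsProbabilityMeasure (m i)) :
    (fiberCoupling γ idx m).map Prod.fst = γ := by
  rw [fiberCoupling, Measure.map_sum measurable_fst.aemeasurable]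
  conv_rhs => rw [← sum_restrict_fiber γ hidx]
  congr 1
  funext i
  rw [Measure.map_fst_prod]
  by_cases h0 : γ (idx ⁻¹' {i}) = 0
  · rw [Measure.restrict_eq_zero.2 h0, smul_zero]
  · have := hm i h0
    rw [measure_univ, one_smul]

lemma ae_fiberCoupling_idx_eq [SFinite γ] [∀ i, SFinite (m i)] (hidx : Measurable idx)
    (hm : ∀ i, ∀ᵐ y ∂m i, idx y = i) :
    ∀ᵐ q ∂fiberCoupling γ idx m, idx q.1 = idx q.2 := by
  refine Measure.ae_sum_iff.2 fun i => ?_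
  have h₁ : ∀ᵐ q ∂(γ.restrict (idx ⁻¹' {i})).prod (m i), idx q.1 = i :=
    Measure.quasiMeasurePreserving_fst.ae (ae_restrict_mem (hidx (measurableSet_singleton i)))
  have h₂ : ∀ᵐ q ∂(γ.restrict (idx ⁻¹' {i})).prod (m i), idx q.2 = i :=
    Measure.quasiMeasurePreserving_snd.ae (hm i)
  filter_upwards [h₁, h₂] with q h₁ h₂ using h₁.trans h₂.symm

lemma lintegral_fiberCoupling_le [SFinite γ] [∀ i, SFinite (m i)] (hidx : Measurable idx)
    (hm : ∀ i, γ (idx ⁻¹' {i}) ≠ 0 → IsProbabilityMeasure (m i))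
    (hm_fiber : ∀ i, ∀ᵐ y ∂m i, idx y = i) {c : X → X → ℝ≥0∞} {C : ℝ≥0∞}
    (hc : ∀ x y, idx x = idx y → c x y ≤ C) :
    ∫⁻ q, c q.1 q.2 ∂fiberCoupling γ idx m ≤ C * γ Set.univ := by
  calc ∫⁻ q, c q.1 q.2 ∂fiberCoupling γ idx m
      ≤ ∫⁻ _, C ∂fiberCoupling γ idx m :=
        lintegral_mono_ae ((ae_fiberCoupling_idx_eq hidx hm_fiber).mono fun q hq => hc _ _ hq)
    _ = C * γ Set.univ := by
        rw [lintegral_const]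
        conv_rhs => rw [← fiberCoupling_map_fst hidx hm]
        rw [Measure.map_apply measurable_fst MeasurableSet.univ, Set.preimage_univ]

lemma integral_sum_smul_fiber [TopologicalSpace X] [OpensMeasurableSpace X]
    [IsFiniteMeasure γ] (hidx : Measurable idx) (hm : ∀ i, m i Set.univ ≤ 1) (f : X →ᵇ ℝ) :
    ∫ y, f y ∂(Measure.sum fun i => γ (idx ⁻¹' {i}) • m i) = ∫ x, ∫ y, f y ∂m (idx x) ∂γ := by
  have hmass : (Measure.sum fun i => γ (idx ⁻¹' {i}) • m i) Set.univ ≤ γ Set.univ := by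
    calc (Measure.sum fun i => γ (idx ⁻¹' {i}) • m i) Set.univ
        ≤ ∑' i, γ (idx ⁻¹' {i}) := by
          rw [Measure.sum_apply _ MeasurableSet.univ]
          exact ENNReal.tsum_le_tsum fun i => mul_le_of_le_one_right' (hm i)
      _ = γ Set.univ := by
          simpa using congrArg (· Set.univ) (sum_restrict_fiber γ hidx)
  have : IsFiniteMeasure (Measure.sum fun i => γ (idx ⁻¹' {i}) • m i) :=
    ⟨hmass.trans_lt (measure_lt_top γ _)⟩
  have hG : Integrable (fun x => ∫ y, f y ∂m (idx x)) γ :=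
    Integrable.of_bound
      ((measurable_of_countable fun i => ∫ y, f y ∂m i).comp hidx).aestronglyMeasurable ‖f‖
      (ae_of_all _ fun x => norm_integral_le_of_measure_univ_le_one (hm _) f)
  rw [integral_sum_measure (f.integrable _)]
  conv_rhs => rw [← sum_restrict_fiber γ hidx]
  rw [integral_sum_measure (by rwa [sum_restrict_fiber γ hidx])]
  congr 1
  funext i
  rw [integral_smul_measure, setIntegral_congr_fun (hidx (measurableSet_singleton i))
    (fun x (hx : idx x = i) => by rw [hx]), setIntegral_const, measureReal_def]

end FiberCoupling

section Cubes

variable {n : ℕ} {ℓ : ℝ} {μ ν : Measure (En n)} {γ : Measure (En n × En n)}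

lemma IsCoupling.isProbabilityMeasure [IsProbabilityMeasure μ] (hγ : IsCoupling μ ν γ) :
    IsProbabilityMeasure γ :=
  ⟨by rw [← Set.preimage_univ (f := Prod.fst), ← Measure.map_apply measurable_fst .univ, hγ.1,
    measure_univ]⟩

lemma IsCoupling.measure_prod_le_left (hγ : IsCoupling μ ν γ) {s t : Set (En n)}
    (hs : MeasurableSet s) : γ (s ×ˢ t) ≤ μ s := by
  rw [← hγ.1, Measure.map_apply measurable_fst hs]
  exact measure_mono (Set.prod_subset_preimage_fst s t)

lemma IsCoupling.measure_prod_le_right (hγ : IsCoupling μ ν γ) {s t : Set (En n)}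
    (ht : MeasurableSet t) : γ (s ×ˢ t) ≤ ν t := by
  rw [← hγ.2, Measure.map_apply measurable_snd ht]
  exact measure_mono (Set.prod_subset_preimage_snd s t)

def cubeIndex (ℓ : ℝ) (x : En n) : Fin n → ℤ := fun i => ⌊x i / ℓ⌋

def cellIndex (ℓ : ℝ) : En n × En n → (Fin n → ℤ) × (Fin n → ℤ) :=
  Prod.map (cubeIndex ℓ) (cubeIndex ℓ)

lemma measurable_cubeIndex (ℓ : ℝ) : Measurable (cubeIndex (n := n) ℓ) :=
  measurable_pi_lambda _ fun i => Int.measurable_floor.comp (by fun_prop)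

lemma measurable_cellIndex (ℓ : ℝ) : Measurable (cellIndex (n := n) ℓ) :=
  (measurable_cubeIndex ℓ).prodMap (measurable_cubeIndex ℓ)

lemma cube_eq_preimage_cubeIndex (hℓ : 0 < ℓ) (j : Fin n → ℤ) :
    cube j ℓ = cubeIndex ℓ ⁻¹' {j} := by
  ext x
  simp only [cube, cubeIndex, Set.mem_ofPred_eq, Set.mem_preimage, Set.mem_singleton_iff,
    funext_iff, Int.floor_eq_iff, le_div_iff₀ hℓ, div_lt_iff₀ hℓ]

lemma measurableSet_cube (hℓ : 0 < ℓ) (j : Fin n → ℤ) : MeasurableSet (cube j ℓ) := by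
  rw [cube_eq_preimage_cubeIndex hℓ]
  exact measurable_cubeIndex ℓ (measurableSet_singleton j)

lemma cube_prod_cube_eq_preimage_cellIndex (hℓ : 0 < ℓ) (jk : (Fin n → ℤ) × (Fin n → ℤ)) :
    cube jk.1 ℓ ×ˢ cube jk.2 ℓ = cellIndex ℓ ⁻¹' {jk} := by
  rw [cube_eq_preimage_cubeIndex hℓ, cube_eq_preimage_cubeIndex hℓ, cellIndex,
    ← Set.preimage_prod_map_prod, Set.singleton_prod_singleton]

lemma norm_sub_sq_le_of_cubeIndex_eq (hℓ : 0 < ℓ) {x y : En n}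
    (h : cubeIndex ℓ x = cubeIndex ℓ y) : ‖x - y‖ ^ 2 ≤ n * ℓ ^ 2 := by
  have hcoord : ∀ i, (x i - y i) ^ 2 ≤ ℓ ^ 2 := fun i => by
    have h1 := Int.abs_sub_lt_one_of_floor_eq_floor (congrFun h i)
    rw [← sub_div, abs_div, abs_of_pos hℓ, div_lt_one hℓ] at h1
    exact sq_le_sq.2 (by rw [abs_of_pos hℓ]; exact h1.le)
  calc ‖x - y‖ ^ 2 = ∑ i, (x i - y i) ^ 2 := by simp [EuclideanSpace.norm_sq_eq]
    _ ≤ ∑ _i : Fin n, ℓ ^ 2 := Finset.sum_le_sum fun i _ => hcoord i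
    _ = n * ℓ ^ 2 := by simp

lemma dist_le_of_cubeIndex_eq (hℓ : 0 < ℓ) {x y : En n}
    (h : cubeIndex ℓ x = cubeIndex ℓ y) : dist x y ≤ √n * ℓ := by
  rw [dist_eq_norm, ← Real.sqrt_sq (norm_nonneg _), ← Real.sqrt_sq hℓ.le,
    ← Real.sqrt_mul (Nat.cast_nonneg n)]
  exact Real.sqrt_le_sqrt (norm_sub_sq_le_of_cubeIndex_eq hℓ h)

lemma dist_le_of_cellIndex_eq (hℓ : 0 < ℓ) {p q : En n × En n}
    (h : cellIndex ℓ p = cellIndex ℓ q) : dist p q ≤ √n * ℓ := by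
  rw [Prod.dist_eq]
  exact max_le (dist_le_of_cubeIndex_eq hℓ (congrArg Prod.fst h))
    (dist_le_of_cubeIndex_eq hℓ (congrArg Prod.snd h))

lemma cellCost_le_of_cellIndex_eq (hℓ : 0 < ℓ) {p q : En n × En n}
    (h : cellIndex ℓ p = cellIndex ℓ q) :
    (‖p.1 - q.1‖₊ : ℝ≥0∞) ^ 2 + (‖p.2 - q.2‖₊ : ℝ≥0∞) ^ 2 ≤ ENNReal.ofReal (2 * n * ℓ ^ 2) := by
  have hcube : ∀ {x y : En n}, cubeIndex ℓ x = cubeIndex ℓ y →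
      (‖x - y‖₊ : ℝ≥0∞) ^ 2 ≤ ENNReal.ofReal (n * ℓ ^ 2) := fun hxy => by
    rw [← enorm_eq_nnnorm, ← ofReal_norm, ← ENNReal.ofReal_pow (norm_nonneg _)]
    exact ENNReal.ofReal_le_ofReal (norm_sub_sq_le_of_cubeIndex_eq hℓ hxy)
  calc (‖p.1 - q.1‖₊ : ℝ≥0∞) ^ 2 + (‖p.2 - q.2‖₊ : ℝ≥0∞) ^ 2
      ≤ ENNReal.ofReal (n * ℓ ^ 2) + ENNReal.ofReal (n * ℓ ^ 2) :=
        add_le_add (hcube (congrArg Prod.fst h)) (hcube (congrArg Prod.snd h))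
    _ = ENNReal.ofReal (2 * n * ℓ ^ 2) := by
        rw [← ENNReal.ofReal_add (by positivity) (by positivity)]
        ring_nf

lemma cellNormalize_apply_univ_le (μ : Measure (En n)) (Q : Set (En n)) :
    cellNormalize μ Q Set.univ ≤ 1 := by
  rw [cellNormalize, Measure.smul_apply, smul_eq_mul, Measure.restrict_apply_univ]
  exact ENNReal.inv_mul_le_one _

instance (μ : Measure (En n)) (Q : Set (En n)) : IsFiniteMeasure (cellNormalize μ Q) :=
  ⟨(cellNormalize_apply_univ_le μ Q).trans_lt one_lt_top⟩

lemma isProbabilityMeasure_cellNormalize [IsFiniteMeasure μ] {Q : Set (En n)} (h : μ Q ≠ 0) :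
    IsProbabilityMeasure (cellNormalize μ Q) := by
  constructor
  rw [cellNormalize, Measure.smul_apply, smul_eq_mul, Measure.restrict_apply_univ]
  exact ENNReal.inv_mul_cancel h (measure_ne_top μ Q)

lemma ae_cubeIndex_cellNormalize (hℓ : 0 < ℓ) (μ : Measure (En n)) (j : Fin n → ℤ) :
    ∀ᵐ x ∂cellNormalize μ (cube j ℓ), cubeIndex ℓ x = j := by
  rw [cube_eq_preimage_cubeIndex hℓ]
  exact Measure.ae_smul_measure
    (ae_restrict_mem (measurable_cubeIndex ℓ (measurableSet_singleton j))) _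

/-- `μ_j^ℓ ⊗ ν_k^ℓ` for `jk = (j, k)`. -/
def blockMeasure (μ ν : Measure (En n)) (ℓ : ℝ) (jk : (Fin n → ℤ) × (Fin n → ℤ)) :
    Measure (En n × En n) :=
  (cellNormalize μ (cube jk.1 ℓ)).prod (cellNormalize ν (cube jk.2 ℓ))

instance (μ ν : Measure (En n)) (ℓ : ℝ) (jk : (Fin n → ℤ) × (Fin n → ℤ)) :
    IsFiniteMeasure (blockMeasure μ ν ℓ jk) := by
  rw [blockMeasure]
  infer_instance

lemma blockMeasure_apply_univ_le (μ ν : Measure (En n)) (ℓ : ℝ)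
    (jk : (Fin n → ℤ) × (Fin n → ℤ)) : blockMeasure μ ν ℓ jk Set.univ ≤ 1 := by
  rw [blockMeasure, ← Set.univ_prod_univ, Measure.prod_prod]
  exact mul_le_one' (cellNormalize_apply_univ_le _ _) (cellNormalize_apply_univ_le _ _)

lemma ae_cellIndex_blockMeasure (hℓ : 0 < ℓ) (μ ν : Measure (En n))
    (jk : (Fin n → ℤ) × (Fin n → ℤ)) : ∀ᵐ q ∂blockMeasure μ ν ℓ jk, cellIndex ℓ q = jk := by
  rw [blockMeasure]
  filter_upwards [Measure.quasiMeasurePreserving_fst.ae (ae_cubeIndex_cellNormalize hℓ μ jk.1),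
    Measure.quasiMeasurePreserving_snd.ae (ae_cubeIndex_cellNormalize hℓ ν jk.2)] with q h₁ h₂
  exact Prod.ext h₁ h₂

lemma isProbabilityMeasure_blockMeasure [IsFiniteMeasure μ] [IsFiniteMeasure ν]
    (hγ : IsCoupling μ ν γ) (hℓ : 0 < ℓ) {jk : (Fin n → ℤ) × (Fin n → ℤ)}
    (h : γ (cellIndex ℓ ⁻¹' {jk}) ≠ 0) : IsProbabilityMeasure (blockMeasure μ ν ℓ jk) := by
  rw [← cube_prod_cube_eq_preimage_cellIndex hℓ] at h
  have hμ : μ (cube jk.1 ℓ) ≠ 0 := fun h0 =>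
    h (le_zero_iff.1 (h0 ▸ hγ.measure_prod_le_left (measurableSet_cube hℓ jk.1)))
  have hν : ν (cube jk.2 ℓ) ≠ 0 := fun h0 =>
    h (le_zero_iff.1 (h0 ▸ hγ.measure_prod_le_right (measurableSet_cube hℓ jk.2)))
  have := isProbabilityMeasure_cellNormalize hμ
  have := isProbabilityMeasure_cellNormalize hν
  rw [blockMeasure]
  infer_instance

lemma blockApprox_eq_sum (hℓ : 0 < ℓ) (μ ν : Measure (En n)) (γ : Measure (En n × En n)) :
    blockApprox μ ν γ ℓ =
      Measure.sum fun jk => γ (cellIndex ℓ ⁻¹' {jk}) • blockMeasure μ ν ℓ jk := by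
  simp_rw [blockApprox, cube_prod_cube_eq_preimage_cellIndex hℓ]
  rfl

lemma W2sqP_blockApprox_le [IsProbabilityMeasure μ] [IsFiniteMeasure ν]
    (hγ : IsCoupling μ ν γ) (hℓ : 0 < ℓ) :
    W2sqP γ (blockApprox μ ν γ ℓ) ≤ ENNReal.ofReal (2 * n * ℓ ^ 2) := by
  have := hγ.isProbabilityMeasure
  have hprob := fun jk (h : γ (cellIndex ℓ ⁻¹' {jk}) ≠ 0) =>
    isProbabilityMeasure_blockMeasure hγ hℓ h
  have hπ : IsCouplingP γ (blockApprox μ ν γ ℓ)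
      (fiberCoupling γ (cellIndex ℓ) (blockMeasure μ ν ℓ)) :=
    ⟨fiberCoupling_map_fst (measurable_cellIndex ℓ) hprob,
      by rw [fiberCoupling_map_snd, blockApprox_eq_sum hℓ]⟩
  calc W2sqP γ (blockApprox μ ν γ ℓ)
      ≤ tCostP (fiberCoupling γ (cellIndex ℓ) (blockMeasure μ ν ℓ)) := iInf₂_le _ hπ
    _ ≤ ENNReal.ofReal (2 * n * ℓ ^ 2) * γ Set.univ :=
        lintegral_fiberCoupling_le (c := fun p q => (‖p.1 - q.1‖₊ : ℝ≥0∞) ^ 2 + ‖p.2 - q.2‖₊ ^ 2)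
          (measurable_cellIndex ℓ) hprob (ae_cellIndex_blockMeasure hℓ μ ν)
          fun _ _ => cellCost_le_of_cellIndex_eq hℓ
    _ = ENNReal.ofReal (2 * n * ℓ ^ 2) := by rw [measure_univ, mul_one]

lemma tendsto_integral_blockApprox [IsProbabilityMeasure μ] [IsFiniteMeasure ν]
    (hγ : IsCoupling μ ν γ) (f : En n × En n →ᵇ ℝ) :
    Tendsto (fun ℓ : ℝ => ∫ p, f p ∂(blockApprox μ ν γ ℓ)) (𝓝[>] 0) (𝓝 (∫ p, f p ∂γ)) := by
  have := hγ.isProbabilityMeasure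
  rw [tendsto_iff_seq_tendsto]
  intro u hu
  have hpos : ∀ᶠ k in atTop, 0 < u k := hu self_mem_nhdsWithin
  have hrepr : ∀ᶠ k in atTop, ∫ p, ∫ q, f q ∂blockMeasure μ ν (u k) (cellIndex (u k) p) ∂γ =
      ∫ p, f p ∂(blockApprox μ ν γ (u k)) := hpos.mono fun k hk => by
    rw [blockApprox_eq_sum hk, integral_sum_smul_fiber (measurable_cellIndex _)
      (blockMeasure_apply_univ_le μ ν _) f]
  -- only countably many scales can be handled at once, hence the passage to sequences
  have hgood : ∀ᵐ p ∂γ, ∀ k, γ (cellIndex (u k) ⁻¹' {cellIndex (u k) p}) ≠ 0 :=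
    ae_all_iff.2 fun k => ae_measure_fiber_ne_zero γ (measurable_cellIndex _)
  refine Tendsto.congr' hrepr (tendsto_integral_filter_of_dominated_convergence (fun _ => ‖f‖)
    (.of_forall fun k => ((measurable_of_countable fun jk => ∫ q, f q ∂blockMeasure μ ν (u k) jk).comp
      (measurable_cellIndex _)).aestronglyMeasurable)
    (.of_forall fun k => ae_of_all _ fun p =>
      norm_integral_le_of_measure_univ_le_one (blockMeasure_apply_univ_le μ ν _ _) f)
    (integrable_const _) ?_)
  filter_upwards [hgood] with p hp
  refine tendsto_integral_of_ae_dist_le (r := fun k => √n * u k) f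
    (hpos.mono fun k hk => isProbabilityMeasure_blockMeasure hγ hk (hp k)) ?_
    (hpos.mono fun k hk => (ae_cellIndex_blockMeasure hk μ ν _).mono fun q hq =>
      dist_le_of_cellIndex_eq hk hq)
  simpa using (tendsto_nhds_of_tendsto_nhdsWithin hu).const_mul √n

end Cubes

theorem stmt_8_general {n : ℕ} (μ ν : Measure (En n))
    [IsProbabilityMeasure μ] [IsProbabilityMeasure ν]
    (γ : Measure (En n × En n)) (hγ : IsCoupling μ ν γ) :
    (∀ ℓ : ℝ, 0 < ℓ →
        W2sqP γ (blockApprox μ ν γ ℓ) ≤ ENNReal.ofReal (2 * n * ℓ ^ 2)) ∧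
      ∀ f : BoundedContinuousFunction (En n × En n) ℝ,
        Tendsto (fun ℓ : ℝ => ∫ p, f p ∂(blockApprox μ ν γ ℓ)) (𝓝[>] (0:ℝ))
          (𝓝 (∫ p, f p ∂γ)) :=
  ⟨fun _ hℓ => W2sqP_blockApprox_le hγ hℓ, fun f => tendsto_integral_blockApprox hγ f⟩

/-- `W²(γ,γ_ℓ) ≤ 2 n ℓ²` for the block approximation, and consequently
`γ_ℓ → γ` narrowly as `ℓ → 0⁺`. -/
theorem stmt_8 {n : ℕ} (μ ν : Measure (En n))
    [IsProbabilityMeasure μ] [IsProbabilityMeasure ν]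
    (hμM : M2 μ ≠ ∞) (hνM : M2 ν ≠ ∞)
    (γ : Measure (En n × En n)) (hγ : IsCoupling μ ν γ) :
    (∀ ℓ : ℝ, 0 < ℓ →
        W2sqP γ (blockApprox μ ν γ ℓ) ≤ ENNReal.ofReal (2 * n * ℓ ^ 2)) ∧
      ∀ f : BoundedContinuousFunction (En n × En n) ℝ,
        Tendsto (fun ℓ : ℝ => ∫ p, f p ∂(blockApprox μ ν γ ℓ)) (𝓝[>] (0:ℝ))
          (𝓝 (∫ p, f p ∂γ)) :=
  stmt_8_general μ ν γ hγ
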